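/- For the sequence d_k = 1/binom(m+k-1, m-1) with m >= 3 (arising from g(P^k) = 1/tau_m(P^k)), the inequality sum_{k=1}^n d_k + (n+1) d_{n+1} <= 1 holds for every n >= 1. -/

import Mathlib

lemma choose_ge_aux (m k : ℕ) (hm : 3 ≤ m) :
    (k + 1) * (k + 2) ≤ 2 * (m + k - 1).choose (m - 1) := by
  have h1 : (m + k - 1).choose (m - 1) = (m + k - 1).choose k := by
    have hk : k ≤ m + k - 1 := by omega
    have : (m + k - 1) - k = m - 1 := by omega
    rw [← this, Nat.choose_symm hk]
  have h2 : (k + 2).choose k ≤ (m + k - 1).choose k :=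
    Nat.choose_le_choose k (by omega)
  have h3 : (k + 2).choose k = (k + 2).choose 2 := by
    have h := Nat.choose_symm (n := k + 2) (k := 2) (by omega)
    simpa using h
  have h4 : (k + 2).choose 2 = (k + 2) * (k + 1) / 2 := Nat.choose_two_right _
  have h5 : 2 * ((k + 2) * (k + 1) / 2) = (k + 2) * (k + 1) := by
    apply Nat.two_mul_div_two_of_even
    simpa [mul_comm] using Nat.even_mul_succ_self (k + 1)
  have h6 : (k + 1) * (k + 2) = (k + 2) * (k + 1) := Nat.mul_comm _ _
  omega

lemma term_le (m k : ℕ) (hm : 3 ≤ m) :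
    (1 : ℝ) / ((m + k - 1).choose (m - 1) : ℝ) ≤ 2 / ((k + 1) * (k + 2)) := by
  have hc : 0 < ((m + k - 1).choose (m - 1) : ℝ) := by
    have : 0 < (m + k - 1).choose (m - 1) := Nat.choose_pos (by omega)
    exact_mod_cast this
  have hk : (0:ℝ) < ((k:ℝ) + 1) * ((k:ℝ) + 2) := by positivity
  rw [div_le_div_iff₀ hc hk]
  have := choose_ge_aux m k hm
  have : ((k + 1) * (k + 2) : ℝ) ≤ 2 * ((m + k - 1).choose (m - 1) : ℝ) := by
    exact_mod_cast this
  push_cast at this ⊢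
  linarith

lemma tele (n : ℕ) :
    ∑ k ∈ Finset.Icc 1 n, (2 : ℝ) / ((k + 1) * (k + 2)) = 1 - 2 / (n + 2) := by
  induction n with
  | zero => simp
  | succ n ih =>
      rw [Finset.sum_Icc_succ_top (by omega), ih]
      push_cast
      have h1 : ((n:ℝ) + 2) ≠ 0 := by positivity
      have h2 : ((n:ℝ) + 1 + 2) ≠ 0 := by positivity
      field_simp
      ring

/-- For `d_k = 1/binom(m+k-1, m-1)` with `m ≥ 3`, the inequality
`∑_{k=1}^n d_k + (n+1) d_{n+1} ≤ 1` holds for all `n ≥ 1`. -/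
theorem inv_choose_sum_le_one (m : ℕ) (hm : 3 ≤ m) (n : ℕ) (hn : 1 ≤ n) :
    ∑ k ∈ Finset.Icc 1 n, (1 : ℝ) / ((m + k - 1).choose (m - 1) : ℝ) +
      ((n : ℝ) + 1) / ((m + (n + 1) - 1).choose (m - 1) : ℝ) ≤ 1 := by
  have hsum : ∑ k ∈ Finset.Icc 1 n, (1 : ℝ) / ((m + k - 1).choose (m - 1) : ℝ)
      ≤ ∑ k ∈ Finset.Icc 1 n, (2 : ℝ) / ((k + 1) * (k + 2)) :=
    Finset.sum_le_sum fun k _ => term_le m k hm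
  have hlast : ((n : ℝ) + 1) / ((m + (n + 1) - 1).choose (m - 1) : ℝ)
      ≤ ((n : ℝ) + 1) * (2 / (((n + 1 : ℕ) + 1) * ((n + 1 : ℕ) + 2))) := by
    have := term_le m (n + 1) hm
    have hn1 : (0:ℝ) ≤ (n:ℝ) + 1 := by positivity
    calc ((n : ℝ) + 1) / ((m + (n + 1) - 1).choose (m - 1) : ℝ)
        = ((n : ℝ) + 1) * (1 / ((m + (n + 1) - 1).choose (m - 1) : ℝ)) := by ring
      _ ≤ _ := by exact mul_le_mul_of_nonneg_left this hn1
  have hbound : ((n : ℝ) + 1) * (2 / (((n + 1 : ℕ) + 1) * ((n + 1 : ℕ) + 2)))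
      ≤ 2 / ((n:ℝ) + 2) := by
    push_cast
    rw [← mul_div_assoc, div_le_div_iff₀ (by positivity) (by positivity)]
    nlinarith [sq_nonneg ((n:ℝ))]
  have := tele n
  linarith
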